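/- In the K-algebra A generated by noncommuting elements x, y subject to x⁴ = 1, xy = yx³, and y² = (1/2)(ζ + x − ζx² + x³), the eight elements 1, x, x², x³, y, xy, x²y, x³y form a K-basis. In particular A has dimension 8 over K. -/

import Mathlib

set_option maxHeartbeats 1000000

open TensorProduct

/-- The defining relations of the second example: `x⁴ = 1`, `xy = yx³`, and
`y² = (1/2)(ζ + x - ζx² + x³)`. -/
inductive SecondRel (K : Type*) [Field K] (ζ : K) :
    FreeAlgebra K (Fin 2) → FreeAlgebra K (Fin 2) → Prop
  | x_pow_four : SecondRel K ζ (FreeAlgebra.ι K 0 ^ 4) 1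
  | x_mul_y : SecondRel K ζ (FreeAlgebra.ι K 0 * FreeAlgebra.ι K 1)
      (FreeAlgebra.ι K 1 * FreeAlgebra.ι K 0 ^ 3)
  | y_sq : SecondRel K ζ (FreeAlgebra.ι K 1 ^ 2)
      ((2 : K)⁻¹ • (ζ • (1 : FreeAlgebra K (Fin 2)) + FreeAlgebra.ι K 0
        - ζ • (FreeAlgebra.ι K 0 ^ 2) + FreeAlgebra.ι K 0 ^ 3))

/-- The second example: the `K`-algebra generated by noncommuting elements `x`, `y`
subject to `x⁴ = 1`, `xy = yx³` and `y² = (1/2)(ζ + x - ζx² + x³)`. -/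
abbrev SecondAlg (K : Type*) [Field K] (ζ : K) : Type _ := RingQuot (SecondRel K ζ)

/-- The generator `x` of the second example. -/
noncomputable def xS (K : Type*) [Field K] (ζ : K) : SecondAlg K ζ :=
  RingQuot.mkAlgHom K (SecondRel K ζ) (FreeAlgebra.ι K 0)

/-- The generator `y` of the second example. -/
noncomputable def yS (K : Type*) [Field K] (ζ : K) : SecondAlg K ζ :=
  RingQuot.mkAlgHom K (SecondRel K ζ) (FreeAlgebra.ι K 1)

namespace Stmt12Aux

section vec8
variable {α : Type*} (a₀ a₁ a₂ a₃ a₄ a₅ a₆ a₇ : α)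
lemma v0 : ![a₀,a₁,a₂,a₃,a₄,a₅,a₆,a₇] 0 = a₀ := rfl
lemma v1 : ![a₀,a₁,a₂,a₃,a₄,a₅,a₆,a₇] 1 = a₁ := rfl
lemma v2 : ![a₀,a₁,a₂,a₃,a₄,a₅,a₆,a₇] 2 = a₂ := rfl
lemma v3 : ![a₀,a₁,a₂,a₃,a₄,a₅,a₆,a₇] 3 = a₃ := rfl
lemma v4 : ![a₀,a₁,a₂,a₃,a₄,a₅,a₆,a₇] 4 = a₄ := rfl
lemma v5 : ![a₀,a₁,a₂,a₃,a₄,a₅,a₆,a₇] 5 = a₅ := rfl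
lemma v6 : ![a₀,a₁,a₂,a₃,a₄,a₅,a₆,a₇] 6 = a₆ := rfl
lemma v7 : ![a₀,a₁,a₂,a₃,a₄,a₅,a₆,a₇] 7 = a₇ := rfl
lemma w0 (h : 0 < 8) : ![a₀,a₁,a₂,a₃,a₄,a₅,a₆,a₇] ⟨0,h⟩ = a₀ := rfl
lemma w1 (h : 1 < 8) : ![a₀,a₁,a₂,a₃,a₄,a₅,a₆,a₇] ⟨1,h⟩ = a₁ := rfl
lemma w2 (h : 2 < 8) : ![a₀,a₁,a₂,a₃,a₄,a₅,a₆,a₇] ⟨2,h⟩ = a₂ := rfl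
lemma w3 (h : 3 < 8) : ![a₀,a₁,a₂,a₃,a₄,a₅,a₆,a₇] ⟨3,h⟩ = a₃ := rfl
lemma w4 (h : 4 < 8) : ![a₀,a₁,a₂,a₃,a₄,a₅,a₆,a₇] ⟨4,h⟩ = a₄ := rfl
lemma w5 (h : 5 < 8) : ![a₀,a₁,a₂,a₃,a₄,a₅,a₆,a₇] ⟨5,h⟩ = a₅ := rfl
lemma w6 (h : 6 < 8) : ![a₀,a₁,a₂,a₃,a₄,a₅,a₆,a₇] ⟨6,h⟩ = a₆ := rfl
lemma w7 (h : 7 < 8) : ![a₀,a₁,a₂,a₃,a₄,a₅,a₆,a₇] ⟨7,h⟩ = a₇ := rfl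
end vec8

variable (K : Type*) [Field K] (ζ : K)

/-- The image of `x` in the regular representation. -/
def X8 : Matrix (Fin 8) (Fin 8) K := Matrix.of
  ![![0,0,0,1,0,0,0,0], ![1,0,0,0,0,0,0,0], ![0,1,0,0,0,0,0,0], ![0,0,1,0,0,0,0,0],
    ![0,0,0,0,0,0,0,1], ![0,0,0,0,1,0,0,0], ![0,0,0,0,0,1,0,0], ![0,0,0,0,0,0,1,0]]

/-- `X8 ^ 2`. -/
def X8b : Matrix (Fin 8) (Fin 8) K := Matrix.of
  ![![0,0,1,0,0,0,0,0], ![0,0,0,1,0,0,0,0], ![1,0,0,0,0,0,0,0], ![0,1,0,0,0,0,0,0],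
    ![0,0,0,0,0,0,1,0], ![0,0,0,0,0,0,0,1], ![0,0,0,0,1,0,0,0], ![0,0,0,0,0,1,0,0]]

/-- `X8 ^ 3`. -/
def X8c : Matrix (Fin 8) (Fin 8) K := Matrix.of
  ![![0,1,0,0,0,0,0,0], ![0,0,1,0,0,0,0,0], ![0,0,0,1,0,0,0,0], ![1,0,0,0,0,0,0,0],
    ![0,0,0,0,0,1,0,0], ![0,0,0,0,0,0,1,0], ![0,0,0,0,0,0,0,1], ![0,0,0,0,1,0,0,0]]

/-- The image of `y` in the regular representation. -/
noncomputable def Y8 : Matrix (Fin 8) (Fin 8) K := Matrix.of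
  ![![0,0,0,0, (2:K)⁻¹*ζ, (2:K)⁻¹, -((2:K)⁻¹*ζ), (2:K)⁻¹],
    ![0,0,0,0, (2:K)⁻¹, -((2:K)⁻¹*ζ), (2:K)⁻¹, (2:K)⁻¹*ζ],
    ![0,0,0,0, -((2:K)⁻¹*ζ), (2:K)⁻¹, (2:K)⁻¹*ζ, (2:K)⁻¹],
    ![0,0,0,0, (2:K)⁻¹, (2:K)⁻¹*ζ, (2:K)⁻¹, -((2:K)⁻¹*ζ)],
    ![1,0,0,0,0,0,0,0],
    ![0,0,0,1,0,0,0,0],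
    ![0,0,1,0,0,0,0,0],
    ![0,1,0,0,0,0,0,0]]

lemma X8_mul_X8 : X8 K * X8 K = X8b K := by
  ext i j
  fin_cases i <;> fin_cases j <;>
    (simp only [X8, X8b, Matrix.of_apply, Matrix.mul_apply, Fin.sum_univ_eight,
      w0, w1, w2, w3, w4, w5, w6, w7, v0, v1, v2, v3, v4, v5, v6, v7]; ring)

lemma X8b_mul_X8 : X8b K * X8 K = X8c K := by
  ext i j
  fin_cases i <;> fin_cases j <;>
    (simp only [X8, X8b, X8c, Matrix.of_apply, Matrix.mul_apply, Fin.sum_univ_eight,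
      w0, w1, w2, w3, w4, w5, w6, w7, v0, v1, v2, v3, v4, v5, v6, v7]; ring)

lemma X8c_mul_X8 : X8c K * X8 K = 1 := by
  ext i j
  fin_cases i <;> fin_cases j <;>
    (simp only [X8, X8c, Matrix.of_apply, Matrix.mul_apply, Matrix.one_apply,
      Fin.sum_univ_eight,
      w0, w1, w2, w3, w4, w5, w6, w7, v0, v1, v2, v3, v4, v5, v6, v7] <;> norm_num [Fin.ext_iff])

lemma X8_pow_two : X8 K ^ 2 = X8b K := by
  rw [pow_succ, pow_one, X8_mul_X8]

lemma X8_pow_three : X8 K ^ 3 = X8c K := by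
  rw [pow_succ, X8_pow_two, X8b_mul_X8]

lemma X8_pow_four : X8 K ^ 4 = 1 := by
  rw [pow_succ, X8_pow_three, X8c_mul_X8]

lemma X8_mul_Y8 : X8 K * Y8 K ζ = Y8 K ζ * X8 K ^ 3 := by
  rw [X8_pow_three]
  ext i j
  fin_cases i <;> fin_cases j <;>
    (simp only [X8, X8c, Y8, Matrix.of_apply, Matrix.mul_apply, Fin.sum_univ_eight,
      w0, w1, w2, w3, w4, w5, w6, w7, v0, v1, v2, v3, v4, v5, v6, v7]; ring)

lemma Y8_mul_Y8 : Y8 K ζ ^ 2 =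
    (2:K)⁻¹ • (ζ • (1 : Matrix (Fin 8) (Fin 8) K) + X8 K - ζ • (X8 K ^ 2) + X8 K ^ 3) := by
  rw [pow_two, X8_pow_two, X8_pow_three]
  ext i j
  fin_cases i <;> fin_cases j <;>
    (simp only [X8, X8b, X8c, Y8, Matrix.of_apply, Matrix.mul_apply, Matrix.smul_apply,
      Matrix.add_apply, Matrix.sub_apply, Matrix.one_apply, smul_eq_mul, Fin.sum_univ_eight,
      w0, w1, w2, w3, w4, w5, w6, w7, v0, v1, v2, v3, v4, v5, v6, v7] <;> norm_num [Fin.ext_iff] <;> ring)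

/-- The lift of the regular representation to the free algebra. -/
noncomputable def F : FreeAlgebra K (Fin 2) →ₐ[K] Matrix (Fin 8) (Fin 8) K :=
  FreeAlgebra.lift K ![X8 K, Y8 K ζ]

lemma F_ι0 : F K ζ (FreeAlgebra.ι K 0) = X8 K := by
  simp [F, FreeAlgebra.lift_ι_apply]

lemma F_ι1 : F K ζ (FreeAlgebra.ι K 1) = Y8 K ζ := by
  simp [F, FreeAlgebra.lift_ι_apply]

lemma F_rel : ∀ ⦃a b⦄, SecondRel K ζ a b → F K ζ a = F K ζ b := by
  intro a b h
  induction h with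
  | x_pow_four => rw [map_pow, map_one, F_ι0, X8_pow_four]
  | x_mul_y => rw [map_mul, map_mul, map_pow, F_ι0, F_ι1, X8_mul_Y8]
  | y_sq =>
      rw [map_pow, map_smul, map_add, map_sub, map_add, map_smul, map_smul, map_one,
        map_pow, map_pow, F_ι0, F_ι1, Y8_mul_Y8]

/-- The regular representation of the second algebra. -/
noncomputable def Φ : SecondAlg K ζ →ₐ[K] Matrix (Fin 8) (Fin 8) K :=
  RingQuot.liftAlgHom K ⟨F K ζ, F_rel K ζ⟩

lemma Φ_x : Φ K ζ (xS K ζ) = X8 K := by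
  rw [xS, Φ, RingQuot.liftAlgHom_mkAlgHom_apply, F_ι0]

lemma Φ_y : Φ K ζ (yS K ζ) = Y8 K ζ := by
  rw [yS, Φ, RingQuot.liftAlgHom_mkAlgHom_apply, F_ι1]

/-- Extracting the 0-th column of a matrix, as a linear map. -/
def col0 : Matrix (Fin 8) (Fin 8) K →ₗ[K] (Fin 8 → K) where
  toFun M := fun i => M i 0
  map_add' _ _ := rfl
  map_smul' _ _ := rfl

lemma col0_apply (M : Matrix (Fin 8) (Fin 8) K) (i : Fin 8) : col0 K M i = M i 0 := rfl

end Stmt12Aux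

open Stmt12Aux in
theorem stmt_12 {K : Type*} [Field K] (ι : K) (hι : IsPrimitiveRoot ι 4)
    (ζ : K) (hζ : ζ ^ 4 = 1) :
    LinearIndependent K
      ![(1 : SecondAlg K ζ), xS K ζ, xS K ζ ^ 2, xS K ζ ^ 3, yS K ζ,
        xS K ζ * yS K ζ, xS K ζ ^ 2 * yS K ζ, xS K ζ ^ 3 * yS K ζ] ∧
    Submodule.span K (Set.range
      ![(1 : SecondAlg K ζ), xS K ζ, xS K ζ ^ 2, xS K ζ ^ 3, yS K ζ,
        xS K ζ * yS K ζ, xS K ζ ^ 2 * yS K ζ, xS K ζ ^ 3 * yS K ζ]) = ⊤ ∧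
    Module.finrank K (SecondAlg K ζ) = 8 := by
  set f : Fin 8 → SecondAlg K ζ :=
    ![(1 : SecondAlg K ζ), xS K ζ, xS K ζ ^ 2, xS K ζ ^ 3, yS K ζ,
      xS K ζ * yS K ζ, xS K ζ ^ 2 * yS K ζ, xS K ζ ^ 3 * yS K ζ] with hfdef
  -- relations in the algebra
  have hx4 : xS K ζ ^ 4 = 1 := by
    have h := RingQuot.mkAlgHom_rel K (SecondRel.x_pow_four (K := K) (ζ := ζ))
    rwa [map_pow, map_one] at h
  have hxy : xS K ζ * yS K ζ = yS K ζ * xS K ζ ^ 3 := by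
    have h := RingQuot.mkAlgHom_rel K (SecondRel.x_mul_y (K := K) (ζ := ζ))
    rwa [map_mul, map_mul, map_pow] at h
  have hy2 : yS K ζ * yS K ζ = (2:K)⁻¹ • (ζ • (1 : SecondAlg K ζ) + xS K ζ
      - ζ • (xS K ζ ^ 2) + xS K ζ ^ 3) := by
    have h := RingQuot.mkAlgHom_rel K (SecondRel.y_sq (K := K) (ζ := ζ))
    rwa [map_pow, map_smul, map_add, map_sub, map_add, map_smul, map_smul, map_one,
      map_pow, map_pow, pow_two] at h
  have hyx1 : yS K ζ * xS K ζ = xS K ζ ^ 3 * yS K ζ := by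
    have e1 : xS K ζ ^ 4 * yS K ζ * xS K ζ = yS K ζ * xS K ζ := by
      rw [hx4, one_mul]
    have e2 : xS K ζ ^ 4 * yS K ζ * xS K ζ = xS K ζ ^ 3 * yS K ζ := by
      calc xS K ζ ^ 4 * yS K ζ * xS K ζ
          = xS K ζ ^ 3 * (xS K ζ * yS K ζ) * xS K ζ := by
            rw [pow_succ, mul_assoc (xS K ζ ^ 3)]
        _ = xS K ζ ^ 3 * (yS K ζ * xS K ζ ^ 3) * xS K ζ := by rw [hxy]
        _ = xS K ζ ^ 3 * yS K ζ * (xS K ζ ^ 3 * xS K ζ) := by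
            rw [← mul_assoc, mul_assoc (xS K ζ ^ 3 * yS K ζ)]
        _ = xS K ζ ^ 3 * yS K ζ := by rw [← pow_succ, hx4, mul_one]
    rw [← e1, e2]
  have hyx2 : yS K ζ * xS K ζ ^ 2 = xS K ζ ^ 2 * yS K ζ := by
    calc yS K ζ * xS K ζ ^ 2 = yS K ζ * xS K ζ * xS K ζ := by
          rw [pow_two, ← mul_assoc]
      _ = xS K ζ ^ 3 * yS K ζ * xS K ζ := by rw [hyx1]
      _ = xS K ζ ^ 3 * (yS K ζ * xS K ζ) := by rw [mul_assoc]
      _ = xS K ζ ^ 3 * (xS K ζ ^ 3 * yS K ζ) := by rw [hyx1]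
      _ = xS K ζ ^ 2 * (xS K ζ ^ 4 * yS K ζ) := by
          rw [← mul_assoc, ← mul_assoc, ← pow_add, ← pow_add]
      _ = xS K ζ ^ 2 * yS K ζ := by rw [hx4, one_mul]
  have hyx3 : yS K ζ * xS K ζ ^ 3 = xS K ζ * yS K ζ := by
    calc yS K ζ * xS K ζ ^ 3 = yS K ζ * xS K ζ ^ 2 * xS K ζ := by
          rw [pow_succ, ← mul_assoc]
      _ = xS K ζ ^ 2 * yS K ζ * xS K ζ := by rw [hyx2]
      _ = xS K ζ ^ 2 * (yS K ζ * xS K ζ) := by rw [mul_assoc]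
      _ = xS K ζ ^ 2 * (xS K ζ ^ 3 * yS K ζ) := by rw [hyx1]
      _ = xS K ζ * (xS K ζ ^ 4 * yS K ζ) := by
          rw [← mul_assoc, ← mul_assoc, ← pow_add, ← pow_succ']
      _ = xS K ζ * yS K ζ := by rw [hx4, one_mul]
  -- spanning
  set S : Submodule K (SecondAlg K ζ) := Submodule.span K (Set.range f) with hSdef
  have hf : ∀ k : Fin 8, f k ∈ S := fun k => Submodule.subset_span ⟨k, rfl⟩
  have m0 : (1 : SecondAlg K ζ) ∈ S := hf 0
  have m1 : xS K ζ ∈ S := hf 1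
  have m2 : xS K ζ ^ 2 ∈ S := hf 2
  have m3 : xS K ζ ^ 3 ∈ S := hf 3
  have m4 : yS K ζ ∈ S := hf 4
  have m5 : xS K ζ * yS K ζ ∈ S := hf 5
  have m6 : xS K ζ ^ 2 * yS K ζ ∈ S := hf 6
  have m7 : xS K ζ ^ 3 * yS K ζ ∈ S := hf 7
  have hc : (2:K)⁻¹ • (ζ • (1 : SecondAlg K ζ) + xS K ζ - ζ • (xS K ζ ^ 2) + xS K ζ ^ 3)
      ∈ S :=
    Submodule.smul_mem _ _ (add_mem (sub_mem (add_mem (Submodule.smul_mem _ _ m0) m1)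
      (Submodule.smul_mem _ _ m2)) m3)
  have hxc : xS K ζ * ((2:K)⁻¹ • (ζ • (1 : SecondAlg K ζ) + xS K ζ - ζ • (xS K ζ ^ 2)
      + xS K ζ ^ 3)) ∈ S := by
    have e : xS K ζ * ((2:K)⁻¹ • (ζ • (1 : SecondAlg K ζ) + xS K ζ - ζ • (xS K ζ ^ 2)
        + xS K ζ ^ 3)) = (2:K)⁻¹ • (ζ • xS K ζ + xS K ζ ^ 2 - ζ • (xS K ζ ^ 3) + 1) := by
      rw [mul_smul_comm, mul_add, mul_sub, mul_add, mul_smul_comm, mul_one, mul_smul_comm,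
        ← pow_two, ← pow_succ', ← pow_succ', hx4]
    rw [e]
    exact Submodule.smul_mem _ _ (add_mem (sub_mem (add_mem (Submodule.smul_mem _ _ m1) m2)
      (Submodule.smul_mem _ _ m3)) m0)
  have hx2c : xS K ζ ^ 2 * ((2:K)⁻¹ • (ζ • (1 : SecondAlg K ζ) + xS K ζ - ζ • (xS K ζ ^ 2)
      + xS K ζ ^ 3)) ∈ S := by
    have e : xS K ζ ^ 2 * ((2:K)⁻¹ • (ζ • (1 : SecondAlg K ζ) + xS K ζ - ζ • (xS K ζ ^ 2)
        + xS K ζ ^ 3)) = (2:K)⁻¹ • (ζ • (xS K ζ ^ 2) + xS K ζ ^ 3 - ζ • (1:SecondAlg K ζ)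
        + xS K ζ) := by
      have h5 : xS K ζ ^ 2 * xS K ζ ^ 3 = xS K ζ := by
        rw [← pow_add]
        norm_num
        rw [pow_succ, hx4, one_mul]
      rw [mul_smul_comm, mul_add, mul_sub, mul_add, mul_smul_comm, mul_one, mul_smul_comm,
        ← pow_succ, ← pow_add, hx4, h5]
    rw [e]
    exact Submodule.smul_mem _ _ (add_mem (sub_mem (add_mem (Submodule.smul_mem _ _ m2) m3)
      (Submodule.smul_mem _ _ m0)) m1)
  have hx3c : xS K ζ ^ 3 * ((2:K)⁻¹ • (ζ • (1 : SecondAlg K ζ) + xS K ζ - ζ • (xS K ζ ^ 2)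
      + xS K ζ ^ 3)) ∈ S := by
    have e : xS K ζ ^ 3 * ((2:K)⁻¹ • (ζ • (1 : SecondAlg K ζ) + xS K ζ - ζ • (xS K ζ ^ 2)
        + xS K ζ ^ 3)) = (2:K)⁻¹ • (ζ • (xS K ζ ^ 3) + 1 - ζ • xS K ζ + xS K ζ ^ 2) := by
      have h5 : xS K ζ ^ 3 * xS K ζ ^ 2 = xS K ζ := by
        rw [← pow_add]
        norm_num
        rw [pow_succ, hx4, one_mul]
      have h6 : xS K ζ ^ 3 * xS K ζ ^ 3 = xS K ζ ^ 2 := by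
        rw [← pow_add]
        norm_num
        rw [show (6:ℕ) = 4 + 2 from rfl, pow_add, hx4, one_mul]
      rw [mul_smul_comm, mul_add, mul_sub, mul_add, mul_smul_comm, mul_one, mul_smul_comm,
        ← pow_succ, hx4, h5, h6]
    rw [e]
    exact Submodule.smul_mem _ _ (add_mem (sub_mem (add_mem (Submodule.smul_mem _ _ m3) m0)
      (Submodule.smul_mem _ _ m1)) m2)
  have hmulgen : ∀ a : SecondAlg K ζ, (∀ k : Fin 8, a * f k ∈ S) → ∀ s ∈ S, a * s ∈ S := by
    intro a ha s hs
    have hle : S.map (LinearMap.mulLeft K a) ≤ S := by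
      rw [hSdef, Submodule.map_span, Submodule.span_le]
      rintro _ ⟨_, ⟨k, rfl⟩, rfl⟩
      exact ha k
    exact hle ⟨s, hs, rfl⟩
  have hxmul : ∀ s ∈ S, xS K ζ * s ∈ S := by
    apply hmulgen
    intro k
    fin_cases k
    · show xS K ζ * 1 ∈ S
      rw [mul_one]; exact m1
    · show xS K ζ * xS K ζ ∈ S
      rw [← pow_two]; exact m2
    · show xS K ζ * xS K ζ ^ 2 ∈ S
      rw [← pow_succ']; exact m3
    · show xS K ζ * xS K ζ ^ 3 ∈ S
      rw [← pow_succ', hx4]; exact m0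
    · exact m5
    · show xS K ζ * (xS K ζ * yS K ζ) ∈ S
      rw [← mul_assoc, ← pow_two]; exact m6
    · show xS K ζ * (xS K ζ ^ 2 * yS K ζ) ∈ S
      rw [← mul_assoc, ← pow_succ']; exact m7
    · show xS K ζ * (xS K ζ ^ 3 * yS K ζ) ∈ S
      rw [← mul_assoc, ← pow_succ', hx4, one_mul]; exact m4
  have hymul : ∀ s ∈ S, yS K ζ * s ∈ S := by
    apply hmulgen
    intro k
    fin_cases k
    · show yS K ζ * 1 ∈ S
      rw [mul_one]; exact m4
    · show yS K ζ * xS K ζ ∈ S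
      rw [hyx1]; exact m7
    · show yS K ζ * xS K ζ ^ 2 ∈ S
      rw [hyx2]; exact m6
    · show yS K ζ * xS K ζ ^ 3 ∈ S
      rw [hyx3]; exact m5
    · show yS K ζ * yS K ζ ∈ S
      rw [hy2]; exact hc
    · show yS K ζ * (xS K ζ * yS K ζ) ∈ S
      rw [← mul_assoc, hyx1, mul_assoc, hy2]; exact hx3c
    · show yS K ζ * (xS K ζ ^ 2 * yS K ζ) ∈ S
      rw [← mul_assoc, hyx2, mul_assoc, hy2]; exact hx2c
    · show yS K ζ * (xS K ζ ^ 3 * yS K ζ) ∈ S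
      rw [← mul_assoc, hyx3, mul_assoc, hy2]; exact hxc
  have hspan : Submodule.span K (Set.range f) = ⊤ := by
    rw [← hSdef, eq_top_iff]
    rintro a -
    obtain ⟨w, rfl⟩ := RingQuot.mkAlgHom_surjective K (SecondRel K ζ) a
    have P : ∀ w : FreeAlgebra K (Fin 2),
        ∀ s ∈ S, RingQuot.mkAlgHom K (SecondRel K ζ) w * s ∈ S := by
      intro w
      induction w using FreeAlgebra.induction with
      | grade0 r =>
          intro s hs
          rw [AlgHom.commutes, Algebra.algebraMap_eq_smul_one, smul_mul_assoc, one_mul]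
          exact Submodule.smul_mem _ _ hs
      | grade1 i =>
          fin_cases i
          · exact hxmul
          · exact hymul
      | mul a b ha hb =>
          intro s hs
          rw [map_mul, mul_assoc]
          exact ha _ (hb s hs)
      | add a b ha hb =>
          intro s hs
          rw [map_add, add_mul]
          exact add_mem (ha s hs) (hb s hs)
    have := P w 1 m0
    rwa [mul_one] at this
  -- linear independence via the regular representation
  have hli : LinearIndependent K f := by
    apply LinearIndependent.of_comp (col0 K ∘ₗ (Φ K ζ).toLinearMap)
    have hcomp : (⇑(col0 K ∘ₗ (Φ K ζ).toLinearMap)) ∘ f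
        = fun k : Fin 8 => (Pi.single k 1 : Fin 8 → K) := by
      funext k
      fin_cases k
      · show col0 K (Φ K ζ 1) = Pi.single (⟨0, by norm_num⟩ : Fin 8) 1
        rw [map_one]
        funext i
        fin_cases i <;>
          (simp only [col0_apply, LinearMap.coe_mk, AddHom.coe_mk, Matrix.one_apply, X8, X8b, X8c, Y8,
            Matrix.of_apply, Matrix.mul_apply, Fin.sum_univ_eight,
            Stmt12Aux.w0, Stmt12Aux.w1, Stmt12Aux.w2, Stmt12Aux.w3, Stmt12Aux.w4,
            Stmt12Aux.w5, Stmt12Aux.w6, Stmt12Aux.w7, Stmt12Aux.v0, Stmt12Aux.v1,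
            Stmt12Aux.v2, Stmt12Aux.v3, Stmt12Aux.v4, Stmt12Aux.v5, Stmt12Aux.v6,
            Stmt12Aux.v7, Pi.single_apply] <;> norm_num [Fin.ext_iff])
      · show col0 K (Φ K ζ (xS K ζ)) = Pi.single (⟨1, by norm_num⟩ : Fin 8) 1
        rw [Φ_x]
        funext i
        fin_cases i <;>
          (simp only [col0_apply, LinearMap.coe_mk, AddHom.coe_mk, Matrix.one_apply, X8, X8b, X8c, Y8,
            Matrix.of_apply, Matrix.mul_apply, Fin.sum_univ_eight,
            Stmt12Aux.w0, Stmt12Aux.w1, Stmt12Aux.w2, Stmt12Aux.w3, Stmt12Aux.w4,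
            Stmt12Aux.w5, Stmt12Aux.w6, Stmt12Aux.w7, Stmt12Aux.v0, Stmt12Aux.v1,
            Stmt12Aux.v2, Stmt12Aux.v3, Stmt12Aux.v4, Stmt12Aux.v5, Stmt12Aux.v6,
            Stmt12Aux.v7, Pi.single_apply] <;> norm_num [Fin.ext_iff])
      · show col0 K (Φ K ζ (xS K ζ ^ 2)) = Pi.single (⟨2, by norm_num⟩ : Fin 8) 1
        rw [map_pow, Φ_x, X8_pow_two]
        funext i
        fin_cases i <;>
          (simp only [col0_apply, LinearMap.coe_mk, AddHom.coe_mk, Matrix.one_apply, X8, X8b, X8c, Y8,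
            Matrix.of_apply, Matrix.mul_apply, Fin.sum_univ_eight,
            Stmt12Aux.w0, Stmt12Aux.w1, Stmt12Aux.w2, Stmt12Aux.w3, Stmt12Aux.w4,
            Stmt12Aux.w5, Stmt12Aux.w6, Stmt12Aux.w7, Stmt12Aux.v0, Stmt12Aux.v1,
            Stmt12Aux.v2, Stmt12Aux.v3, Stmt12Aux.v4, Stmt12Aux.v5, Stmt12Aux.v6,
            Stmt12Aux.v7, Pi.single_apply] <;> norm_num [Fin.ext_iff])
      · show col0 K (Φ K ζ (xS K ζ ^ 3)) = Pi.single (⟨3, by norm_num⟩ : Fin 8) 1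
        rw [map_pow, Φ_x, X8_pow_three]
        funext i
        fin_cases i <;>
          (simp only [col0_apply, LinearMap.coe_mk, AddHom.coe_mk, Matrix.one_apply, X8, X8b, X8c, Y8,
            Matrix.of_apply, Matrix.mul_apply, Fin.sum_univ_eight,
            Stmt12Aux.w0, Stmt12Aux.w1, Stmt12Aux.w2, Stmt12Aux.w3, Stmt12Aux.w4,
            Stmt12Aux.w5, Stmt12Aux.w6, Stmt12Aux.w7, Stmt12Aux.v0, Stmt12Aux.v1,
            Stmt12Aux.v2, Stmt12Aux.v3, Stmt12Aux.v4, Stmt12Aux.v5, Stmt12Aux.v6,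
            Stmt12Aux.v7, Pi.single_apply] <;> norm_num [Fin.ext_iff])
      · show col0 K (Φ K ζ (yS K ζ)) = Pi.single (⟨4, by norm_num⟩ : Fin 8) 1
        rw [Φ_y]
        funext i
        fin_cases i <;>
          (simp only [col0_apply, LinearMap.coe_mk, AddHom.coe_mk, Matrix.one_apply, X8, X8b, X8c, Y8,
            Matrix.of_apply, Matrix.mul_apply, Fin.sum_univ_eight,
            Stmt12Aux.w0, Stmt12Aux.w1, Stmt12Aux.w2, Stmt12Aux.w3, Stmt12Aux.w4,
            Stmt12Aux.w5, Stmt12Aux.w6, Stmt12Aux.w7, Stmt12Aux.v0, Stmt12Aux.v1,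
            Stmt12Aux.v2, Stmt12Aux.v3, Stmt12Aux.v4, Stmt12Aux.v5, Stmt12Aux.v6,
            Stmt12Aux.v7, Pi.single_apply] <;> norm_num [Fin.ext_iff])
      · show col0 K (Φ K ζ (xS K ζ * yS K ζ)) = Pi.single (⟨5, by norm_num⟩ : Fin 8) 1
        rw [map_mul, Φ_x, Φ_y]
        funext i
        fin_cases i <;>
          (simp only [col0_apply, LinearMap.coe_mk, AddHom.coe_mk, X8, Y8, Matrix.of_apply,
            Matrix.mul_apply, Fin.sum_univ_eight,
            Stmt12Aux.w0, Stmt12Aux.w1, Stmt12Aux.w2, Stmt12Aux.w3, Stmt12Aux.w4,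
            Stmt12Aux.w5, Stmt12Aux.w6, Stmt12Aux.w7, Stmt12Aux.v0, Stmt12Aux.v1,
            Stmt12Aux.v2, Stmt12Aux.v3, Stmt12Aux.v4, Stmt12Aux.v5, Stmt12Aux.v6,
            Stmt12Aux.v7, Pi.single_apply] <;> norm_num [Fin.ext_iff])
      · show col0 K (Φ K ζ (xS K ζ ^ 2 * yS K ζ)) = Pi.single (⟨6, by norm_num⟩ : Fin 8) 1
        rw [map_mul, map_pow, Φ_x, Φ_y, X8_pow_two]
        funext i
        fin_cases i <;>
          (simp only [col0_apply, LinearMap.coe_mk, AddHom.coe_mk, X8b, Y8, Matrix.of_apply,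
            Matrix.mul_apply, Fin.sum_univ_eight,
            Stmt12Aux.w0, Stmt12Aux.w1, Stmt12Aux.w2, Stmt12Aux.w3, Stmt12Aux.w4,
            Stmt12Aux.w5, Stmt12Aux.w6, Stmt12Aux.w7, Stmt12Aux.v0, Stmt12Aux.v1,
            Stmt12Aux.v2, Stmt12Aux.v3, Stmt12Aux.v4, Stmt12Aux.v5, Stmt12Aux.v6,
            Stmt12Aux.v7, Pi.single_apply] <;> norm_num [Fin.ext_iff])
      · show col0 K (Φ K ζ (xS K ζ ^ 3 * yS K ζ)) = Pi.single (⟨7, by norm_num⟩ : Fin 8) 1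
        rw [map_mul, map_pow, Φ_x, Φ_y, X8_pow_three]
        funext i
        fin_cases i <;>
          (simp only [col0_apply, LinearMap.coe_mk, AddHom.coe_mk, X8c, Y8, Matrix.of_apply,
            Matrix.mul_apply, Fin.sum_univ_eight,
            Stmt12Aux.w0, Stmt12Aux.w1, Stmt12Aux.w2, Stmt12Aux.w3, Stmt12Aux.w4,
            Stmt12Aux.w5, Stmt12Aux.w6, Stmt12Aux.w7, Stmt12Aux.v0, Stmt12Aux.v1,
            Stmt12Aux.v2, Stmt12Aux.v3, Stmt12Aux.v4, Stmt12Aux.v5, Stmt12Aux.v6,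
            Stmt12Aux.v7, Pi.single_apply] <;> norm_num [Fin.ext_iff])
    rw [hcomp]
    have hb := (Pi.basisFun K (Fin 8)).linearIndependent
    rwa [show ⇑(Pi.basisFun K (Fin 8)) = fun k : Fin 8 => (Pi.single k 1 : Fin 8 → K)
      from funext fun k => Pi.basisFun_apply K (Fin 8) k] at hb
  refine ⟨hli, hspan, ?_⟩
  have b : Module.Basis (Fin 8) K (SecondAlg K ζ) := Module.Basis.mk hli (by rw [hspan])
  rw [Module.finrank_eq_card_basis b]
  simp
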